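/- In the canonical model built from a maximal consistent set z, writing ‖A‖ = {x ∈ Δ | A ∈ x}: for every w ∈ Δ and every formula A, if ‖A‖ ≠ ∅ then ‖A‖ has a ≺_w-minimal element, i.e. min_{≺_w}(‖A‖) = {y ∈ ‖A‖ | ∀v, v ≺_w y → v ∉ ‖A‖} is nonempty. -/

import Mathlib

/-!
Given `A ∈ x ∈ Δ`, extend `{A} ∪ {¬B | (A ⇇ B) ∈ w} ∪ {¬C | (C ⇇ ⊥) ∉ z}` to a maximal
consistent set `y`. The third part puts `y` into `Δ`; the second part makes every `v ≺_w y`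
contain `¬A`.

The seed is consistent: a refutation has the shape `⊢ A ⊓ ¬(B₁ ⊔ … ⊔ Bₙ) → C₁ ⊔ … ⊔ Cₘ`.
Axiom (5) gives `(A ⇇ ⋁Bᵢ) ∈ w`, hence `((A ⊓ ¬⋁Bᵢ) ⇇ ⊥) ∈ w`; along `R(z, w)` and axiom (6)
this formula reaches `z` (for `n = 0` it comes from `R(z, x)` instead). By (Mon),
`(⋁Cⱼ ⇇ ⊥) ∈ z`, and since `⇇` splits over `⊔` on the left some `(Cⱼ ⇇ ⊥)` lies in `z`
(for `m = 0` this is `(⊥ ⇇ ⊥) ∈ z`, which axiom (1) excludes).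

Maximal consistent sets are closed under tautological consequence, so every purely
propositional step is checked by evaluating Boolean valuations.
-/

/-- Formulas of the language L_CSL: propositional variables, ⊥, negation,
conjunction, and the comparative similarity connective `cls` (A ⇇ B). -/
inductive CSLForm : Type
  | var : ℕ → CSLForm
  | bot : CSLForm
  | neg : CSLForm → CSLForm
  | and : CSLForm → CSLForm → CSLForm
  | cls : CSLForm → CSLForm → CSLForm

namespace CSLForm

def top : CSLForm := neg bot
def or (A B : CSLForm) : CSLForm := neg (and (neg A) (neg B))
def imp (A B : CSLForm) : CSLForm := or (neg A) B

end CSLForm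

/-- A boolean valuation respecting the classical connectives
(⇇-formulas and variables are treated as atoms). -/
def IsBoolVal (v : CSLForm → Bool) : Prop :=
  v .bot = false ∧ (∀ A, v (.neg A) = !v A) ∧ (∀ A B, v (.and A B) = (v A && v B))

/-- Classical tautologies of L_CSL. -/
def CSLTautology (A : CSLForm) : Prop := ∀ v, IsBoolVal v → v A = true

/-- The Hilbert system CSMS. -/
inductive CSMS : CSLForm → Prop
  | taut {A : CSLForm} : CSLTautology A → CSMS A
  | mp {A B : CSLForm} : CSMS (A.imp B) → CSMS A → CSMS B
  | mon {A B : CSLForm} (C : CSLForm) : CSMS (A.imp B) → CSMS ((A.cls C).imp (B.cls C))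
  | ax1 (A B : CSLForm) : CSMS ((A.cls B).neg.or (B.cls A).neg)
  | ax2 (A B C : CSLForm) : CSMS ((A.cls B).imp ((A.cls C).or (C.cls B)))
  | ax3 (A B : CSLForm) : CSMS ((A.and B.neg).imp (A.cls B))
  | ax4 (A B : CSLForm) : CSMS ((A.cls B).imp B.neg)
  | ax5 (A B C : CSLForm) : CSMS (((A.cls B).and (A.cls C)).imp (A.cls (B.or C)))
  | ax6 (A : CSLForm) : CSMS ((A.cls .bot).imp (((A.cls .bot).neg.cls .bot).neg))

/-- Semantic extension of a formula, given preferential relations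
`pref w x y` (meaning x ≺_w y) and a valuation of propositional variables. -/
def prefEval {W : Type} (pref : W → W → W → Prop) (val : ℕ → Set W) :
    CSLForm → Set W
  | .var i => val i
  | .bot => ∅
  | .neg A => (prefEval pref val A)ᶜ
  | .and A B => prefEval pref val A ∩ prefEval pref val B
  | .cls A B =>
      {w | ∃ x ∈ prefEval pref val A, ∀ y ∈ prefEval pref val B, pref w x y}

/-- A CSL-preferential model. -/
structure CSLPrefModel (W : Type) where
  ne : Nonempty W
  pref : W → W → W → Prop
  modular : ∀ w x y z, pref w x y → pref w z y ∨ pref w x z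
  centered : ∀ w x, x = w ∨ pref w w x
  limit : ∀ w (X : Set W), X.Nonempty → {y ∈ X | ∀ z, pref w z y → z ∉ X}.Nonempty
  val : ℕ → Set W

def CSLPrefModel.eval {W : Type} (M : CSLPrefModel W) : CSLForm → Set W :=
  prefEval M.pref M.val

/-- Distance from a point to a set, in ℝ≥0∞ (so that it is ∞ on the empty set). -/
noncomputable def setDist {W : Type} (d : W → W → ℝ) (w : W) (X : Set W) : ENNReal :=
  ⨅ x ∈ X, ENNReal.ofReal (d w x)

/-- A CSL-distance minspace model. -/
structure CSLMinModel (W : Type) where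
  ne : Nonempty W
  dist : W → W → ℝ
  dist_nonneg : ∀ x y, 0 ≤ dist x y
  dist_eq_zero : ∀ x y, dist x y = 0 ↔ x = y
  min_attained : ∀ (w : W) (X : Set W), X.Nonempty → ∃ x ∈ X, ∀ y ∈ X, dist w x ≤ dist w y
  val : ℕ → Set W

noncomputable def CSLMinModel.eval {W : Type} (M : CSLMinModel W) : CSLForm → Set W
  | .var i => M.val i
  | .bot => ∅
  | .neg A => (M.eval A)ᶜ
  | .and A B => M.eval A ∩ M.eval B
  | .cls A B => {w | setDist M.dist w (M.eval A) < setDist M.dist w (M.eval B)}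

/-- Iterated disjunction of a list of formulas. -/
def bigOr : List CSLForm → CSLForm
  | [] => .bot
  | [A] => A
  | A :: B :: rest => A.or (bigOr (B :: rest))

/-- Iterated conjunction of a list of formulas. -/
def bigAnd : List CSLForm → CSLForm
  | [] => .top
  | [A] => A
  | A :: B :: rest => A.and (bigAnd (B :: rest))

/-- Γ is inconsistent wrt CSMS: there are A₁,…,Aₙ ∈ Γ (n ≥ 1) with ⊢ ¬A₁ ⊔ … ⊔ ¬Aₙ. -/
def Inconsistent (Γ : Set CSLForm) : Prop :=
  ∃ L : List CSLForm, L ≠ [] ∧ (∀ A ∈ L, A ∈ Γ) ∧ CSMS (bigOr (L.map .neg))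

def Consistent (Γ : Set CSLForm) : Prop := ¬ Inconsistent Γ

def MaxConsistent (Γ : Set CSLForm) : Prop :=
  Consistent Γ ∧ ∀ A, A ∉ Γ → Inconsistent (insert A Γ)

/-- w^A = {¬B | (A ⇇ B) ∈ w}. -/
def projSet (w : Set CSLForm) (A : CSLForm) : Set CSLForm :=
  {F | ∃ B, F = CSLForm.neg B ∧ (A.cls B) ∈ w}

/-- R(x,y) iff every A ∈ y satisfies (A ⇇ ⊥) ∈ x. -/
def Rrel (x y : Set CSLForm) : Prop := ∀ A, A ∈ y → (A.cls .bot) ∈ x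

/-- The canonical preferential relation: x ≺_w y iff
∃ B ∈ y such that ∀ A ∈ x, (A ⇇ B) ∈ w. -/
def canonPrec (w x y : Set CSLForm) : Prop :=
  ∃ B, B ∈ y ∧ ∀ A, A ∈ x → (A.cls B) ∈ w

open CSLForm

namespace IsBoolVal

variable {v : CSLForm → Bool} (hv : IsBoolVal v)
include hv

theorem eval_bot : v .bot = false := hv.1

theorem eval_neg (A : CSLForm) : v A.neg = !v A := hv.2.1 A

theorem eval_and (A B : CSLForm) : v (A.and B) = (v A && v B) := hv.2.2 A B

theorem eval_or (A B : CSLForm) : v (A.or B) = (v A || v B) := by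
  simp [CSLForm.or, hv.eval_neg, hv.eval_and]

theorem eval_imp (A B : CSLForm) : v (A.imp B) = (!v A || v B) := by
  simp [CSLForm.imp, hv.eval_or, hv.eval_neg]

theorem eval_bigOr (L : List CSLForm) : v (bigOr L) = true ↔ ∃ A ∈ L, v A = true := by
  induction L using bigOr.induct with
  | case1 => simp [bigOr, hv.eval_bot]
  | case2 A => simp [bigOr]
  | case3 A B L ih => simp [bigOr, hv.eval_or, ih]

theorem eval_bigOr_map_neg (L : List CSLForm) :
    v (bigOr (L.map neg)) = true ↔ ∃ A ∈ L, v A = false := by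
  simp [hv.eval_bigOr, hv.eval_neg]

end IsBoolVal

/-- Truth in the one-world model. -/
def oneWorldVal : CSLForm → Bool
  | .var _ => false
  | .bot => false
  | .neg A => !oneWorldVal A
  | .and A B => oneWorldVal A && oneWorldVal B
  | .cls A B => oneWorldVal A && !oneWorldVal B

theorem isBoolVal_oneWorldVal : IsBoolVal oneWorldVal := ⟨rfl, fun _ => rfl, fun _ _ => rfl⟩

namespace CSMS

theorem oneWorldVal_eq_true {A : CSLForm} (h : CSMS A) : oneWorldVal A = true := by
  have hv := isBoolVal_oneWorldVal
  induction h with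
  | taut ht => exact ht _ hv
  | mp _ _ ih₁ ih₂ => simpa [hv.eval_imp, ih₂] using ih₁
  | mon C _ ih =>
    simp only [hv.eval_imp, oneWorldVal] at ih ⊢
    cases oneWorldVal C <;> simp_all
  | ax1 A B =>
    simp only [hv.eval_or, oneWorldVal]
    cases oneWorldVal A <;> cases oneWorldVal B <;> rfl
  | ax2 A B C =>
    simp only [hv.eval_imp, hv.eval_or, oneWorldVal]
    cases oneWorldVal A <;> cases oneWorldVal B <;> cases oneWorldVal C <;> rfl
  | ax3 A B =>
    simp only [hv.eval_imp, oneWorldVal]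
    cases oneWorldVal A <;> cases oneWorldVal B <;> rfl
  | ax4 A B =>
    simp only [hv.eval_imp, oneWorldVal]
    cases oneWorldVal A <;> cases oneWorldVal B <;> rfl
  | ax5 A B C =>
    simp only [hv.eval_imp, hv.eval_or, oneWorldVal]
    cases oneWorldVal A <;> cases oneWorldVal B <;> cases oneWorldVal C <;> rfl
  | ax6 A =>
    simp only [hv.eval_imp, oneWorldVal]
    cases oneWorldVal A <;> rfl

theorem not_bot : ¬ CSMS .bot := fun h => by simpa [oneWorldVal] using h.oneWorldVal_eq_true

theorem of_forall_isBoolVal {Ts : List CSLForm} (hTs : ∀ T ∈ Ts, CSMS T) {B : CSLForm}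
    (h : ∀ v, IsBoolVal v → (∀ T ∈ Ts, v T = true) → v B = true) : CSMS B := by
  induction Ts generalizing B with
  | nil => exact taut fun v hv => h v hv (by simp)
  | cons T Ts ih =>
    refine mp (ih (fun T' hT' => hTs T' (.tail _ hT')) fun v hv hvTs => ?_) (hTs T (.head _))
    cases hT : v T
    · simp [hv.eval_imp, hT]
    · simpa [hv.eval_imp, hT] using h v hv (by simpa [hT] using hvTs)

theorem imp_of_forall_isBoolVal {B C : CSLForm}
    (h : ∀ v, IsBoolVal v → v B = true → v C = true) : CSMS (B.imp C) :=
  taut fun v hv => by cases hB : v B <;> simp [hv.eval_imp, hB, h v hv]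

end CSMS

theorem inconsistent_of_forall_isBoolVal {Γ : Set CSLForm} {Ts L : List CSLForm}
    (hTs : ∀ T ∈ Ts, CSMS T) (hL : ∀ A ∈ L, A ∈ Γ)
    (h : ∀ v, IsBoolVal v → (∀ T ∈ Ts, v T = true) → ∃ A ∈ L, v A = false) :
    Inconsistent Γ := by
  rcases eq_or_ne L [] with rfl | hne
  · exact absurd (CSMS.of_forall_isBoolVal hTs fun v hv hvTs => by simpa using h v hv hvTs)
      CSMS.not_bot
  · exact ⟨L, hne, hL, CSMS.of_forall_isBoolVal hTs fun v hv hvTs =>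
      (hv.eval_bigOr_map_neg L).2 (h v hv hvTs)⟩

theorem Consistent.exists_maxConsistent_superset {Γ : Set CSLForm} (h : Consistent Γ) :
    ∃ Δ, Γ ⊆ Δ ∧ MaxConsistent Δ := by
  have hchains : ∀ c ⊆ {Δ | Consistent Δ ∧ Γ ⊆ Δ}, IsChain (· ⊆ ·) c → c.Nonempty →
      ∃ ub ∈ {Δ | Consistent Δ ∧ Γ ⊆ Δ}, ∀ s ∈ c, s ⊆ ub := by
    rintro c hc hchain ⟨Δ, hΔ⟩
    refine ⟨⋃₀ c, ⟨?_, (hc hΔ).2.trans (Set.subset_sUnion_of_mem hΔ)⟩,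
      fun _ => Set.subset_sUnion_of_mem⟩
    rintro ⟨L, hne, hL, hLc⟩
    obtain ⟨Δ', hΔ', hLΔ'⟩ := hchain.directedOn.exists_mem_subset_of_finite_of_subset_sUnion
      ⟨Δ, hΔ⟩ L.finite_toSet hL
    exact (hc hΔ').1 ⟨L, hne, hLΔ', hLc⟩
  obtain ⟨Δ, hΓΔ, hΔ⟩ := zorn_subset_nonempty _ hchains Γ ⟨h, subset_rfl⟩
  refine ⟨Δ, hΓΔ, hΔ.1.1, fun A hA => by_contra fun hcons => hA ?_⟩
  exact hΔ.2 ⟨hcons, hΔ.1.2.trans (Set.subset_insert _ _)⟩ (Set.subset_insert _ _)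
    (Set.mem_insert _ _)

namespace MaxConsistent

variable {Γ : Set CSLForm} (hΓ : MaxConsistent Γ)
include hΓ

theorem exists_refutation_of_not_mem {B : CSLForm} (hB : B ∉ Γ) :
    ∃ X, CSMS X ∧ ∃ L : List CSLForm, (∀ A ∈ L, A ∈ Γ) ∧
      ∀ v, IsBoolVal v → v X = true → v B = true → ∃ A ∈ L, v A = false := by
  classical
  obtain ⟨L, -, hL, hX⟩ := hΓ.2 B hB
  refine ⟨_, hX, L.filter (· ∈ Γ), fun A hA => by simpa using (List.mem_filter.1 hA).2,
    fun v hv hvX hvB => ?_⟩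
  obtain ⟨A, hAL, hvA⟩ := (hv.eval_bigOr_map_neg L).1 hvX
  rcases Set.mem_insert_iff.1 (hL A hAL) with rfl | hAΓ
  · simp [hvB] at hvA
  · exact ⟨A, List.mem_filter.2 ⟨hAL, by simpa⟩, hvA⟩

theorem mem_of_forall_isBoolVal {Ts L : List CSLForm} (hTs : ∀ T ∈ Ts, CSMS T)
    (hL : ∀ A ∈ L, A ∈ Γ) {B : CSLForm}
    (h : ∀ v, IsBoolVal v → (∀ T ∈ Ts, v T = true) → (∀ A ∈ L, v A = true) → v B = true) :
    B ∈ Γ := by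
  by_contra hB
  obtain ⟨X, hX, L', hL', hrefute⟩ := hΓ.exists_refutation_of_not_mem hB
  refine hΓ.1 (inconsistent_of_forall_isBoolVal (Ts := X :: Ts) (L := L ++ L')
    (by simpa [hX] using hTs) (fun A hA => (List.mem_append.1 hA).elim (hL A) (hL' A))
    fun v hv hvTs => ?_)
  by_cases hvL : ∀ A ∈ L, v A = true
  · obtain ⟨A, hA, hvA⟩ := hrefute v hv (hvTs X (.head _))
      (h v hv (fun T hT => hvTs T (.tail _ hT)) hvL)
    exact ⟨A, List.mem_append_right _ hA, hvA⟩
  · push Not at hvL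
    obtain ⟨A, hA, hvA⟩ := hvL
    exact ⟨A, List.mem_append_left _ hA, by simpa using hvA⟩

theorem mem_of_csms {B : CSLForm} (hB : CSMS B) : B ∈ Γ :=
  hΓ.mem_of_forall_isBoolVal (Ts := [B]) (L := []) (by simpa) (by simp)
    fun _ _ hvTs _ => hvTs B (.head _)

theorem bot_not_mem : CSLForm.bot ∉ Γ := fun h =>
  hΓ.1 (inconsistent_of_forall_isBoolVal (Ts := []) (L := [.bot]) (by simp) (by simpa)
    fun _ hv _ => ⟨.bot, .head _, hv.eval_bot⟩)

theorem neg_mem_iff {B : CSLForm} : B.neg ∈ Γ ↔ B ∉ Γ := by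
  constructor
  · intro hnB hB
    refine hΓ.1 (inconsistent_of_forall_isBoolVal (Ts := []) (L := [B, B.neg]) (by simp)
      (by simp [hB, hnB]) fun v hv _ => ?_)
    cases hvB : v B
    · exact ⟨B, by simp, hvB⟩
    · exact ⟨B.neg, by simp, by simp [hv.eval_neg, hvB]⟩
  · intro hB
    obtain ⟨X, hX, L, hL, hrefute⟩ := hΓ.exists_refutation_of_not_mem hB
    refine hΓ.mem_of_forall_isBoolVal (Ts := [X]) (by simpa) hL fun v hv hvX hvL => ?_
    cases hvB : v B
    · simp [hv.eval_neg, hvB]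
    · obtain ⟨A, hA, hvA⟩ := hrefute v hv (hvX X (.head _)) hvB
      simp [hvL A hA] at hvA

theorem and_mem_iff {B C : CSLForm} : B.and C ∈ Γ ↔ B ∈ Γ ∧ C ∈ Γ := by
  constructor
  · intro h
    have hBC (v : CSLForm → Bool) (hv : IsBoolVal v) (hvL : ∀ A ∈ [B.and C], v A = true) :
        v B = true ∧ v C = true := by
      simpa [hv.eval_and] using hvL
    exact ⟨hΓ.mem_of_forall_isBoolVal (Ts := []) (by simp) (by simpa) fun v hv _ hvL =>
        (hBC v hv hvL).1,
      hΓ.mem_of_forall_isBoolVal (Ts := []) (by simp) (by simpa) fun v hv _ hvL =>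
        (hBC v hv hvL).2⟩
  · rintro ⟨hB, hC⟩
    exact hΓ.mem_of_forall_isBoolVal (Ts := []) (L := [B, C]) (by simp) (by simp [hB, hC])
      fun v hv _ hvL => by simpa [hv.eval_and] using hvL

theorem or_mem_iff {B C : CSLForm} : B.or C ∈ Γ ↔ B ∈ Γ ∨ C ∈ Γ := by
  simp only [CSLForm.or, hΓ.neg_mem_iff, hΓ.and_mem_iff]
  tauto

theorem imp_mem_iff {B C : CSLForm} : B.imp C ∈ Γ ↔ (B ∈ Γ → C ∈ Γ) := by
  simp only [CSLForm.imp, hΓ.or_mem_iff, hΓ.neg_mem_iff]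
  tauto

theorem mem_of_csms_imp {B C : CSLForm} (h : CSMS (B.imp C)) (hB : B ∈ Γ) : C ∈ Γ :=
  hΓ.imp_mem_iff.1 (hΓ.mem_of_csms h) hB

theorem cls_mem_of_csms_imp {B C : CSLForm} (h : CSMS (B.imp C)) (D : CSLForm)
    (hBD : B.cls D ∈ Γ) : C.cls D ∈ Γ :=
  hΓ.mem_of_csms_imp (CSMS.mon D h) hBD

theorem cls_self_not_mem (B : CSLForm) : B.cls B ∉ Γ := by
  have h := hΓ.mem_of_csms (CSMS.ax1 B B)
  rw [hΓ.or_mem_iff, hΓ.neg_mem_iff] at h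
  tauto

theorem cls_not_mem_of_csms_imp {B C : CSLForm} (h : CSMS (B.imp C)) : B.cls C ∉ Γ :=
  fun hBC => hΓ.cls_self_not_mem C (hΓ.cls_mem_of_csms_imp h C hBC)

theorem cls_mem_of_csms_imp_right {A B C : CSLForm} (h : CSMS (C.imp B))
    (hAB : A.cls B ∈ Γ) : A.cls C ∈ Γ :=
  (hΓ.or_mem_iff.1 (hΓ.mem_of_csms_imp (CSMS.ax2 A B C) hAB)).resolve_right
    (hΓ.cls_not_mem_of_csms_imp h)

theorem cls_or_mem {A B C : CSLForm} (hB : A.cls B ∈ Γ) (hC : A.cls C ∈ Γ) :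
    A.cls (B.or C) ∈ Γ :=
  hΓ.mem_of_csms_imp (CSMS.ax5 A B C) (hΓ.and_mem_iff.2 ⟨hB, hC⟩)

theorem cls_mem_or_cls_mem_of_or_cls {A₁ A₂ C : CSLForm} (h : (A₁.or A₂).cls C ∈ Γ) :
    A₁.cls C ∈ Γ ∨ A₂.cls C ∈ Γ := by
  have h₁ := hΓ.or_mem_iff.1 (hΓ.mem_of_csms_imp (CSMS.ax2 _ C A₁) h)
  have h₂ := hΓ.or_mem_iff.1 (hΓ.mem_of_csms_imp (CSMS.ax2 _ C A₂) h)
  by_contra! hneg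
  exact hΓ.cls_self_not_mem _
    (hΓ.cls_or_mem (h₁.resolve_right hneg.1) (h₂.resolve_right hneg.2))

theorem and_neg_cls_bot_mem {A D : CSLForm} (h : A.cls D ∈ Γ) :
    (A.and D.neg).cls .bot ∈ Γ := by
  have hsplit : ((A.and D.neg).or (A.and D)).cls D ∈ Γ :=
    hΓ.cls_mem_of_csms_imp (CSMS.imp_of_forall_isBoolVal fun v hv hvA => by
      cases hvD : v D <;> simp [hv.eval_or, hv.eval_and, hv.eval_neg, hvA, hvD]) D h
  rcases hΓ.cls_mem_or_cls_mem_of_or_cls hsplit with h' | h'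
  · exact hΓ.cls_mem_of_csms_imp_right
      (CSMS.imp_of_forall_isBoolVal fun v hv hvbot => by simp [hv.eval_bot] at hvbot) h'
  · exact absurd h' (hΓ.cls_not_mem_of_csms_imp
      (CSMS.imp_of_forall_isBoolVal fun v hv hvAD => by simp_all [hv.eval_and]))

theorem cls_bot_mem_of_mem {B : CSLForm} (hB : B ∈ Γ) : B.cls .bot ∈ Γ :=
  hΓ.mem_of_csms_imp (CSMS.ax3 B .bot) (hΓ.and_mem_iff.2 ⟨hB, hΓ.neg_mem_iff.2 hΓ.bot_not_mem⟩)

theorem cls_bot_mem_of_cls_bot_cls_bot {F : CSLForm} (h : (F.cls .bot).cls .bot ∈ Γ) :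
    F.cls .bot ∈ Γ := by
  by_contra hF
  have hG := hΓ.cls_bot_mem_of_mem (hΓ.neg_mem_iff.2 hF)
  exact hΓ.neg_mem_iff.1 (hΓ.mem_of_csms_imp (CSMS.ax6 _) hG)
    (hΓ.mem_of_csms_imp (CSMS.mon .bot (CSMS.ax6 F)) h)

theorem cls_bigOr_mem (A : CSLForm) :
    ∀ {Bs : List CSLForm}, Bs ≠ [] → (∀ B ∈ Bs, A.cls B ∈ Γ) → A.cls (bigOr Bs) ∈ Γ
  | [], hne, _ => absurd rfl hne
  | [B], _, hBs => hBs B (.head _)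
  | B :: _ :: _, _, hBs =>
    hΓ.cls_or_mem (hBs B (.head _))
      (cls_bigOr_mem A (List.cons_ne_nil _ _) fun B' hB' => hBs B' (.tail _ hB'))

theorem exists_cls_bot_mem_of_bigOr_cls_bot :
    ∀ {Cs : List CSLForm}, (bigOr Cs).cls .bot ∈ Γ → ∃ C ∈ Cs, C.cls .bot ∈ Γ
  | [], h => absurd h (hΓ.cls_self_not_mem .bot)
  | [C], h => ⟨C, .head _, h⟩
  | C :: _ :: _, h => by
    rcases hΓ.cls_mem_or_cls_mem_of_or_cls h with hC | hCs
    · exact ⟨C, .head _, hC⟩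
    · obtain ⟨D, hD, hDΓ⟩ := exists_cls_bot_mem_of_bigOr_cls_bot hCs
      exact ⟨D, .tail _ hD, hDΓ⟩

end MaxConsistent

theorem exists_neg_lists_of_forall_mem {A : CSLForm} {P Q : CSLForm → Prop} {L : List CSLForm}
    (h : ∀ F ∈ L, F = A ∨ (∃ B, F = B.neg ∧ P B) ∨ ∃ C, F = C.neg ∧ Q C) :
    ∃ Bs Cs : List CSLForm, (∀ B ∈ Bs, P B) ∧ (∀ C ∈ Cs, Q C) ∧
      ∀ F ∈ L, F = A ∨ F ∈ Bs.map neg ∨ F ∈ Cs.map neg := by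
  induction L with
  | nil => exact ⟨[], [], by simp, by simp, by simp⟩
  | cons F L ih =>
    obtain ⟨Bs, Cs, hBs, hCs, hL⟩ := ih fun G hG => h G (.tail _ hG)
    rcases h F (.head _) with rfl | ⟨B, rfl, hB⟩ | ⟨C, rfl, hC⟩
    · exact ⟨Bs, Cs, hBs, hCs, by simpa using hL⟩
    · refine ⟨B :: Bs, Cs, by simpa [hB] using hBs, hCs, ?_⟩
      intro G hG
      rcases List.mem_cons.1 hG with rfl | hG
      · simp
      · rcases hL G hG with h | h | h <;> simp [h]
    · refine ⟨Bs, C :: Cs, hBs, by simpa [hC] using hCs, ?_⟩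
      intro G hG
      rcases List.mem_cons.1 hG with rfl | hG
      · simp
      · rcases hL G hG with h | h | h <;> simp [h]

def minWorldSeed (z w : Set CSLForm) (A : CSLForm) : Set CSLForm :=
  insert A (projSet w A ∪ {F | ∃ C : CSLForm, F = C.neg ∧ C.cls .bot ∉ z})

theorem and_neg_bigOr_cls_bot_mem {z w : Set CSLForm} (hz : MaxConsistent z)
    (hw : MaxConsistent w) (hzw : Rrel z w) {A : CSLForm} (hA : A.cls .bot ∈ z)
    {Bs : List CSLForm} (hBs : ∀ B ∈ Bs, A.cls B ∈ w) :
    (A.and (bigOr Bs).neg).cls .bot ∈ z := by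
  rcases eq_or_ne Bs [] with rfl | hne
  · exact hz.cls_mem_of_csms_imp (CSMS.imp_of_forall_isBoolVal fun v hv hvA => by
      simp [bigOr, hv.eval_and, hv.eval_neg, hv.eval_bot, hvA]) _ hA
  · exact hz.cls_bot_mem_of_cls_bot_cls_bot
      (hzw _ (hw.and_neg_cls_bot_mem (hw.cls_bigOr_mem A hne hBs)))

theorem consistent_minWorldSeed {z w : Set CSLForm} (hz : MaxConsistent z)
    (hw : MaxConsistent w) (hzw : Rrel z w) {A : CSLForm} (hA : A.cls .bot ∈ z) :
    Consistent (minWorldSeed z w A) := by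
  rintro ⟨L, -, hL, hrefute⟩
  obtain ⟨Bs, Cs, hBs, hCs, hLcover⟩ := exists_neg_lists_of_forall_mem hL
  have hderiv : CSMS ((A.and (bigOr Bs).neg).imp (bigOr Cs)) :=
    CSMS.of_forall_isBoolVal (Ts := [_]) (by simpa using hrefute) fun v hv hvT => by
      obtain ⟨F, hF, hvF⟩ := (hv.eval_bigOr_map_neg L).1 (hvT _ (.head _))
      rw [hv.eval_imp, hv.eval_and, hv.eval_neg]
      rcases hLcover F hF with rfl | hFB | hFC
      · simp [hvF]
      · obtain ⟨B, hB, rfl⟩ := List.mem_map.1 hFB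
        have hvBs : v (bigOr Bs) = true :=
          (hv.eval_bigOr Bs).2 ⟨B, hB, by simpa [hv.eval_neg] using hvF⟩
        simp [hvBs]
      · obtain ⟨C, hC, rfl⟩ := List.mem_map.1 hFC
        have hvCs : v (bigOr Cs) = true :=
          (hv.eval_bigOr Cs).2 ⟨C, hC, by simpa [hv.eval_neg] using hvF⟩
        simp [hvCs]
  obtain ⟨C, hC, hCz⟩ := hz.exists_cls_bot_mem_of_bigOr_cls_bot
    (hz.cls_mem_of_csms_imp hderiv _ (and_neg_bigOr_cls_bot_mem hz hw hzw hA hBs))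
  exact hCs C hC hCz

/-- in the canonical model over z, if ‖A‖ = {x ∈ Δ | A ∈ x} is
nonempty then it has a ≺_w-minimal element, for any w ∈ Δ. -/
theorem canonical_limit_assumption (z : Set CSLForm) (hz : MaxConsistent z)
    (w : Set CSLForm) (hw : MaxConsistent w ∧ Rrel z w) (A : CSLForm)
    (hne : ∃ x : Set CSLForm, (MaxConsistent x ∧ Rrel z x) ∧ A ∈ x) :
    ∃ y : Set CSLForm, (MaxConsistent y ∧ Rrel z y) ∧ A ∈ y ∧
      ∀ v : Set CSLForm, (MaxConsistent v ∧ Rrel z v) →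
        canonPrec w v y → A ∉ v := by
  obtain ⟨x, ⟨-, hzx⟩, hAx⟩ := hne
  obtain ⟨y, hseed, hy⟩ :=
    (consistent_minWorldSeed hz hw.1 hw.2 (hzx A hAx)).exists_maxConsistent_superset
  refine ⟨y, ⟨hy, fun C hC => ?_⟩, hseed (Set.mem_insert _ _), fun v _ ⟨B, hB, hvB⟩ hAv => ?_⟩
  · by_contra hCz
    exact hy.neg_mem_iff.1 (hseed (Or.inr (Or.inr ⟨C, rfl, hCz⟩))) hC
  · exact hy.neg_mem_iff.1 (hseed (Or.inr (Or.inl ⟨B, rfl, hvB A hAv⟩))) hB
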